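/- arXiv:0904.2848 — 2 statements merged into one kernel-verified Lean document; each statement's English description precedes it below -/
import Mathlib

section
/- Every nonzero simple left submodule of the M_e(D)-module W^e (where W is a vector space over a division ring D) has the form K_1·ω̃ = { column vector (a_{11}ω, a_{21}ω, ..., a_{e1}ω) : a_{i1} ∈ D } for some ω ∈ W, where K_1 is the left ideal of M_e(D) consisting of matrices supported on the first column. -/
/-- The action of the matrix ring `M_e(D)` on column vectors `W^e`. -/
noncomputable instance matrixSMul {D : Type*} [DivisionRing D] {e : ℕ}
    {W : Type*} [AddCommGroup W] [Module D W] :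
    SMul (Matrix (Fin e) (Fin e) D) (Fin e → W) :=
  ⟨fun A v i => ∑ j, A i j • v j⟩

lemma matrixSMul_apply {D : Type*} [DivisionRing D] {e : ℕ}
    {W : Type*} [AddCommGroup W] [Module D W]
    (A : Matrix (Fin e) (Fin e) D) (v : Fin e → W) (i : Fin e) :
    (A • v) i = ∑ j, A i j • v j := rfl

/-- `W^e` is a left module over `M_e(D)`. -/
noncomputable instance matrixModule {D : Type*} [DivisionRing D] {e : ℕ}
    {W : Type*} [AddCommGroup W] [Module D W] :
    Module (Matrix (Fin e) (Fin e) D) (Fin e → W) where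
  one_smul v := funext fun i => by
    rw [matrixSMul_apply]
    simp [Matrix.one_apply, ite_smul]
  mul_smul A B v := funext fun i => by
    simp only [matrixSMul_apply, Matrix.mul_apply, Finset.sum_smul, smul_smul,
      Finset.smul_sum]
    exact Finset.sum_comm
  smul_zero A := funext fun i => by
    rw [matrixSMul_apply]; simp
  smul_add A v w := funext fun i => by
    simp only [matrixSMul_apply, Pi.add_apply, smul_add, Finset.sum_add_distrib]
  add_smul A B v := funext fun i => by
    simp only [matrixSMul_apply, Matrix.add_apply, add_smul, Finset.sum_add_distrib,
      Pi.add_apply]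
  zero_smul v := funext fun i => by
    rw [matrixSMul_apply]; simp

/-! The submodule `K₁ · ω̃` is the cyclic submodule generated by `Pi.single k ω`, for any `k`.
Given `0 ≠ v ∈ Δ` with `v k ≠ 0`, the elementary matrix `E_kk` moves `v` to
`Pi.single k (v k)`, so the nonzero cyclic submodule it generates lies in `Δ` and,
`Δ` being an atom, equals `Δ`. -/

section

variable {D : Type*} [DivisionRing D] {e : ℕ} {W : Type*} [AddCommGroup W] [Module D W]

theorem matrix_smul_piSingle_apply (A : Matrix (Fin e) (Fin e) D) (k : Fin e) (ω : W)
    (i : Fin e) : (A • Pi.single k ω) i = A i k • ω := by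
  rw [matrixSMul_apply, Finset.sum_eq_single k (fun j _ hj => by simp [hj]) (by simp)]
  simp

theorem single_smul_eq_piSingle (k j : Fin e) (c : D) (v : Fin e → W) :
    Matrix.single k j c • v = Pi.single k (c • v j) := by
  funext i
  rw [matrixSMul_apply]
  rcases eq_or_ne i k with rfl | hik
  · simp [Matrix.single_apply]
  · simp [hik.symm]

theorem piSingle_mem_of_mem {N : Submodule (Matrix (Fin e) (Fin e) D) (Fin e → W)}
    {v : Fin e → W} (hv : v ∈ N) (k : Fin e) : Pi.single k (v k) ∈ N := by
  rw [← one_smul D (v k), ← single_smul_eq_piSingle]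
  exact N.smul_mem _ hv

theorem mem_span_piSingle_iff (k : Fin e) (ω : W) (v : Fin e → W) :
    v ∈ Submodule.span (Matrix (Fin e) (Fin e) D) {(Pi.single k ω : Fin e → W)} ↔
      ∃ a : Fin e → D, ∀ i, v i = a i • ω := by
  rw [Submodule.mem_span_singleton]
  constructor
  · rintro ⟨A, rfl⟩
    exact ⟨fun i => A i k, matrix_smul_piSingle_apply A k ω⟩
  · rintro ⟨a, ha⟩
    refine ⟨Matrix.of fun i j => if j = k then a i else 0, funext fun i => ?_⟩
    rw [matrix_smul_piSingle_apply, ha i]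
    simp

end

/-- Every nonzero simple `M_e(D)`-submodule of `W^e` has the form
`K₁ · ω̃ = {(a₁ • ω, …, a_e • ω) : aᵢ ∈ D}` for some `ω ∈ W`. -/
theorem simple_submodule_of_matrix_module
    {D : Type*} [DivisionRing D] {e : ℕ} {W : Type*} [AddCommGroup W] [Module D W]
    (Δ : Submodule (Matrix (Fin e) (Fin e) D) (Fin e → W))
    (hΔ : IsSimpleModule (Matrix (Fin e) (Fin e) D) Δ) :
    ∃ ω : W, (Δ : Set (Fin e → W)) =
      {v : Fin e → W | ∃ a : Fin e → D, ∀ i, v i = a i • ω} := by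
  have hΔ_atom : IsAtom Δ := isSimpleModule_iff_isAtom.mp hΔ
  obtain ⟨v, hvΔ, hv⟩ := Submodule.exists_mem_ne_zero_of_ne_bot hΔ_atom.1
  obtain ⟨k, hk⟩ := Function.ne_iff.mp hv
  set K := Submodule.span (Matrix (Fin e) (Fin e) D) {(Pi.single k (v k) : Fin e → W)}
  have hKΔ : K ≤ Δ := (Submodule.span_singleton_le_iff_mem _ _).mpr (piSingle_mem_of_mem hvΔ k)
  have hK : K ≠ ⊥ := by simpa [K, Submodule.span_singleton_eq_bot] using hk
  have hKeq : K = Δ := (hΔ_atom.le_iff.mp hKΔ).resolve_left hK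
  refine ⟨v k, Set.ext fun x => ?_⟩
  rw [SetLike.mem_coe, ← hKeq, mem_span_piSingle_iff]
  rfl
end

section
/- Let R = ℤ[i] and let c₁, c₂ ∈ R be nonzero, with D = gcd(c₁, c₂). Then gcd(c₁²/D, c₂) is an associate of D, and consequently the system of congruences r₁c₁ + r₂c₂ ≡ 0 (mod γ), r₂c₁ + r₃c₂ ≡ c₁ (mod γ) has a solution r₁, r₂, r₃ ∈ R for every nonzero modulus γ ∈ R. -/
/-!
Write `g = gcd a b = a x + b y`. Then `g ∣ a²/g = (a/g) a`, and squaring the Bézout identity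
and dividing by `g` gives `g = x² (a²/g) + b (2 x y (a/g) + y² (b/g))`, so every common divisor
of `a²/g` and `b` divides `g`. The congruences are even solvable as equations: with
`r₁ = -x (b/g)`, `r₂ = x (a/g)`, `r₃ = y (a/g)` the first left-hand side is `0` and the second is
`(a/g) g = a`.
-/

namespace EuclideanDomain

variable {R : Type*} [EuclideanDomain R] [DecidableEq R]

theorem gcd_dvd_sq_div_gcd (a b : R) : gcd a b ∣ a ^ 2 / gcd a b := by
  rw [sq, mul_div_assoc a (gcd_dvd_left a b)]
  exact dvd_mul_of_dvd_left (gcd_dvd_left a b) _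

theorem dvd_gcd_of_dvd_sq_div_gcd {a b d : R} (hda : d ∣ a ^ 2 / gcd a b) (hdb : d ∣ b) :
    d ∣ gcd a b := by
  set g := gcd a b
  obtain ⟨e, he⟩ : g ∣ a := gcd_dvd_left a b
  obtain ⟨f, hf⟩ : g ∣ b := gcd_dvd_right a b
  rcases eq_or_ne g 0 with hg | hg
  · rw [hg]
    exact dvd_zero d
  have hbez : g = a * gcdA a b + b * gcdB a b := gcd_eq_gcd_ab a b
  set x := gcdA a b
  set y := gcdB a b
  have hsq : a ^ 2 / g = e * a := by
    rw [show a ^ 2 = g * (e * a) by rw [he]; ring, mul_div_cancel_left₀ _ hg]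
  have hg_eq : g = x ^ 2 * (a ^ 2 / g) + b * (2 * x * y * e + y ^ 2 * f) := by
    refine mul_left_cancel₀ hg ?_
    rw [hsq]
    linear_combination (g + a * x + b * y) * hbez + (x ^ 2 * a + 2 * x * y * b) * he
      + (y ^ 2 * b) * hf
  rw [hg_eq]
  exact dvd_add (dvd_mul_of_dvd_right hda _) (dvd_mul_of_dvd_left hdb _)

theorem associated_gcd_sq_div_gcd (a b : R) : Associated (gcd (a ^ 2 / gcd a b) b) (gcd a b) :=
  associated_of_dvd_dvd (dvd_gcd_of_dvd_sq_div_gcd (gcd_dvd_left _ _) (gcd_dvd_right _ _))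
    (dvd_gcd (gcd_dvd_sq_div_gcd a b) (gcd_dvd_right a b))

theorem exists_mul_add_mul_eq_zero_and_eq (a b : R) :
    ∃ r₁ r₂ r₃ : R, r₁ * a + r₂ * b = 0 ∧ r₂ * a + r₃ * b = a := by
  obtain ⟨e, he⟩ : gcd a b ∣ a := gcd_dvd_left a b
  obtain ⟨f, hf⟩ : gcd a b ∣ b := gcd_dvd_right a b
  refine ⟨-(gcdA a b * f), gcdA a b * e, gcdB a b * e, ?_, ?_⟩
  · linear_combination (-(gcdA a b * f)) * he + (gcdA a b * e) * hf
  · linear_combination (-e) * gcd_eq_gcd_ab a b - he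

end EuclideanDomain

open EuclideanDomain in
theorem gaussianInt_gcd_congruences_general
    (c₁ c₂ : GaussianInt)
    (D : GaussianInt) (hD : D = EuclideanDomain.gcd c₁ c₂) :
    Associated (EuclideanDomain.gcd (c₁ ^ 2 / D) c₂) D ∧
    ∀ γ : GaussianInt, γ ≠ 0 →
      ∃ r₁ r₂ r₃ : GaussianInt,
        γ ∣ (r₁ * c₁ + r₂ * c₂) ∧ γ ∣ (r₂ * c₁ + r₃ * c₂ - c₁) := by
  subst hD
  refine ⟨associated_gcd_sq_div_gcd c₁ c₂, fun γ _ => ?_⟩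
  obtain ⟨r₁, r₂, r₃, hzero, hc₁⟩ := exists_mul_add_mul_eq_zero_and_eq c₁ c₂
  exact ⟨r₁, r₂, r₃, hzero ▸ dvd_zero γ, by rw [hc₁, sub_self]; exact dvd_zero γ⟩

/-- In `ℤ[i]`, for nonzero `c₁, c₂` with `D = gcd(c₁, c₂)`, the gcd
`gcd(c₁²/D, c₂)` is an associate of `D`; consequently the system of congruences
`r₁c₁ + r₂c₂ ≡ 0 (mod γ)`, `r₂c₁ + r₃c₂ ≡ c₁ (mod γ)` is solvable in `ℤ[i]` for every
nonzero modulus `γ`. -/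
theorem gaussianInt_gcd_congruences
    (c₁ c₂ : GaussianInt) (h₁ : c₁ ≠ 0) (h₂ : c₂ ≠ 0)
    (D : GaussianInt) (hD : D = EuclideanDomain.gcd c₁ c₂) :
    Associated (EuclideanDomain.gcd (c₁ ^ 2 / D) c₂) D ∧
    ∀ γ : GaussianInt, γ ≠ 0 →
      ∃ r₁ r₂ r₃ : GaussianInt,
        γ ∣ (r₁ * c₁ + r₂ * c₂) ∧ γ ∣ (r₂ * c₁ + r₃ * c₂ - c₁) :=
  gaussianInt_gcd_congruences_general c₁ c₂ D hD
end
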